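/- arXiv:2211.12813 — 2 statements merged into one kernel-verified Lean document; each statement's English description precedes it below -/
import Mathlib

section
/- Let H be a connected k-regular, r-uniform simple hypergraph on n vertices, and let μ1 be the second-largest eigenvalue of its adjacency matrix. Then k - μ1 < 2k(r-1) · λ(H) · √(n / ⌊n/2⌋), where λ(H) is the L(2,1)-chromatic number of H. -/
open scoped Classical

/-- The "colour distance" between two vertices under a colouring `f`. -/
def hDist {V : Type*} (f : V → ℕ) (u v : V) : ℕ := ((f u : ℤ) - (f v : ℤ)).natAbs

/-- An `L(h,k)`-colouring of the hypergraph with edge family `E`. -/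
def IsLColoring {V : Type*} (E : Finset (Finset V)) (h k : ℕ) (f : V → ℕ) : Prop :=
  (∀ u v : V, u ≠ v → (∃ e ∈ E, u ∈ e ∧ v ∈ e) → h ≤ hDist f u v) ∧
  (∀ u v : V, u ≠ v →
    (∃ e₁ ∈ E, ∃ e₂ ∈ E, u ∈ e₁ ∧ v ∈ e₂ ∧ ((e₁ ∩ e₂) \ {u, v}).Nonempty) →
    k ≤ hDist f u v)

/-- The span of a colouring: maximum colour minus minimum colour. -/
noncomputable def hSpan {V : Type*} [Fintype V] (f : V → ℕ) : ℕ :=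
  Finset.univ.sup f - sInf (Set.range f)

/-- The `L(h,k)`-chromatic number of a hypergraph. -/
noncomputable def lamL {V : Type*} [Fintype V] (E : Finset (Finset V)) (h k : ℕ) : ℕ :=
  sInf {s | ∃ f : V → ℕ, IsLColoring E h k f ∧ hSpan f = s}

/-- A simple hypergraph: edges have cardinality at least 2, and no edge contains another. -/
def HSimple {V : Type*} (E : Finset (Finset V)) : Prop :=
  (∀ e ∈ E, 2 ≤ e.card) ∧ ∀ e₁ ∈ E, ∀ e₂ ∈ E, e₁ ⊆ e₂ → e₁ = e₂

/-- Degree of a vertex in a hypergraph. -/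
noncomputable def hDeg {V : Type*} (E : Finset (Finset V)) (v : V) : ℕ :=
  (E.filter (fun e => v ∈ e)).card

/-- The 2-section of a hypergraph. -/
def twoSection {V : Type*} (E : Finset (Finset V)) : SimpleGraph V where
  Adj u v := u ≠ v ∧ ∃ e ∈ E, u ∈ e ∧ v ∈ e
  symm := ⟨by
    rintro u v ⟨huv, e, he, hu, hv⟩
    exact ⟨huv.symm, e, he, hv, hu⟩⟩
  loopless := ⟨by
    rintro u ⟨h, -⟩
    exact h rfl⟩

/-- The adjacency matrix of a hypergraph: `(u,v)` entry is `1` iff `u ≠ v` and some edge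
contains both. -/
noncomputable def hAdjMatrix {V : Type*} [Fintype V] (E : Finset (Finset V)) :
    Matrix V V ℝ :=
  fun u v => if u ≠ v ∧ ∃ e ∈ E, u ∈ e ∧ v ∈ e then 1 else 0


/-! Gershgorin's theorem bounds every adjacency eigenvalue in absolute value by the maximum
degree of the 2-section, which is at most `k(r-1)`; hence `k - μ₁ ≤ kr`. On the other side, two
vertices sharing an edge need colours at least `2` apart, so `λ(H) ≥ 2`, and `n / ⌊n/2⌋ ≥ 1`.
Since `r ≥ 2`, `kr < 4k(r-1)` closes the gap. -/

lemma Matrix.IsHermitian.abs_eigenvalues_le {n : Type*} [Fintype n] [DecidableEq n]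
    {A : Matrix n n ℝ} (hA : A.IsHermitian) {c : ℝ} (hc : ∀ i, ∑ j, ‖A i j‖ ≤ c) (j : n) :
    |hA.eigenvalues j| ≤ c := by
  have hev : Module.End.HasEigenvalue (Matrix.toLin' A) (hA.eigenvalues j) := by
    rw [Module.End.hasEigenvalue_iff_mem_spectrum, Matrix.spectrum_toLin']
    exact hA.eigenvalues_mem_spectrum_real j
  obtain ⟨w, hw⟩ := eigenvalue_mem_ball hev
  rw [Metric.mem_closedBall, Real.dist_eq] at hw
  calc |hA.eigenvalues j| ≤ |A w w| + |hA.eigenvalues j - A w w| := by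
        linarith [abs_sub_abs_le_abs_sub (hA.eigenvalues j) (A w w)]
    _ ≤ ‖A w w‖ + ∑ i ∈ Finset.univ.erase w, ‖A w i‖ := by rw [Real.norm_eq_abs]; gcongr
    _ = ∑ i, ‖A w i‖ := Finset.add_sum_erase _ (fun i => ‖A w i‖) (Finset.mem_univ w)
    _ ≤ c := hc w

section Hypergraph

variable {V : Type*} (E : Finset (Finset V))

lemma hAdjMatrix_eq_adjMatrix [Fintype V] : hAdjMatrix E = (twoSection E).adjMatrix ℝ := by
  ext u v
  rw [SimpleGraph.adjMatrix_apply]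
  simp only [hAdjMatrix, twoSection]
  congr

lemma sum_norm_hAdjMatrix [Fintype V] (w : V) :
    ∑ j, ‖hAdjMatrix E w j‖ = (twoSection E).degree w := by
  rw [hAdjMatrix_eq_adjMatrix, ← SimpleGraph.card_neighborFinset_eq_degree,
    SimpleGraph.neighborFinset_eq_filter]
  simp [SimpleGraph.adjMatrix_apply, apply_ite, Finset.sum_boole]

lemma twoSection_degree_le [Fintype V] {r : ℕ} (hunif : ∀ e ∈ E, e.card = r) (w : V) :
    (twoSection E).degree w ≤ hDeg E w * (r - 1) := by
  have hsub : (twoSection E).neighborFinset w ⊆ {e ∈ E | w ∈ e}.biUnion (·.erase w) := by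
    intro v hv
    obtain ⟨hne, e, he, hwe, hve⟩ := (SimpleGraph.mem_neighborFinset _ _ _).1 hv
    exact Finset.mem_biUnion.2
      ⟨e, Finset.mem_filter.2 ⟨he, hwe⟩, Finset.mem_erase.2 ⟨hne.symm, hve⟩⟩
  rw [← SimpleGraph.card_neighborFinset_eq_degree]
  refine (Finset.card_le_card hsub).trans (Finset.card_biUnion_le.trans_eq ?_)
  rw [Finset.sum_congr rfl fun e he => ?_, Finset.sum_const, smul_eq_mul, hDeg]
  obtain ⟨he, hwe⟩ := Finset.mem_filter.1 he
  rw [Finset.card_erase_of_mem hwe, hunif e he]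

lemma hDeg_pos {e : Finset V} (he : e ∈ E) {u : V} (hu : u ∈ e) : 0 < hDeg E u :=
  Finset.card_pos.2 ⟨e, Finset.mem_filter.2 ⟨he, hu⟩⟩

lemma isLColoring_mul_of_injective {h k : ℕ} (hkh : k ≤ h) {g : V → ℕ} (hg : g.Injective) :
    IsLColoring E h k (fun w => h * g w) := by
  have key : ∀ u v, u ≠ v → h ≤ hDist (fun w => h * g w) u v := fun u v huv => by
    have hne : (g u : ℤ) - g v ≠ 0 := sub_ne_zero.2 (by exact_mod_cast hg.ne huv)
    simp only [hDist, Nat.cast_mul, ← mul_sub, Int.natAbs_mul, Int.natAbs_natCast]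
    exact Nat.le_mul_of_pos_right h (Int.natAbs_pos.2 hne)
  exact ⟨fun u v huv _ => key u v huv, fun u v huv _ => hkh.trans (key u v huv)⟩

lemma hDist_le_hSpan [Fintype V] (f : V → ℕ) (u v : V) : hDist f u v ≤ hSpan f := by
  have hu : f u ≤ Finset.univ.sup f := Finset.le_sup (Finset.mem_univ u)
  have hv : f v ≤ Finset.univ.sup f := Finset.le_sup (Finset.mem_univ v)
  have hu' : sInf (Set.range f) ≤ f u := Nat.sInf_le ⟨u, rfl⟩
  have hv' : sInf (Set.range f) ≤ f v := Nat.sInf_le ⟨v, rfl⟩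
  unfold hDist hSpan
  omega

lemma le_lamL_of_adj [Fintype V] {h k : ℕ} (hkh : k ≤ h) {u v : V}
    (huv : (twoSection E).Adj u v) :
    h ≤ lamL E h k := by
  have hcol : IsLColoring E h k (fun w => h * (Fintype.equivFin V w : ℕ)) :=
    isLColoring_mul_of_injective E hkh (Fin.val_injective.comp (Fintype.equivFin V).injective)
  obtain ⟨f, hf, hspan⟩ := Nat.sInf_mem
    (s := {s | ∃ f : V → ℕ, IsLColoring E h k f ∧ hSpan f = s}) ⟨_, _, hcol, rfl⟩
  rw [lamL, ← hspan]
  exact (hf.1 u v huv.1 huv.2).trans (hDist_le_hSpan f u v)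

end Hypergraph

lemma one_le_sqrt_div_half {n : ℕ} (hn : 2 ≤ n) : 1 ≤ √((n : ℝ) / ((n / 2 : ℕ) : ℝ)) := by
  rw [Real.one_le_sqrt, one_le_div (by exact_mod_cast Nat.div_pos hn two_pos)]
  exact_mod_cast Nat.div_le_self n 2

/-- For a connected `k`-regular `r`-uniform simple hypergraph `H` on `n`
vertices with second-largest adjacency eigenvalue `μ 1`,
`k - μ 1 < 2k(r-1) · λ(H) · √(n / ⌊n/2⌋)`. -/
theorem hyper_spectralGap_lt_lambda {V : Type*} [Fintype V] (E : Finset (Finset V))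
    (k r n : ℕ)
    (hn : Fintype.card V = n) (hn2 : 2 ≤ n)
    (hsimple : HSimple E)
    (hconn : (twoSection E).Connected)
    (hreg : ∀ v : V, hDeg E v = k)
    (hunif : ∀ e ∈ E, e.card = r)
    (hA : (hAdjMatrix E).IsHermitian)
    (μ : Fin n → ℝ)
    (hperm : ∃ σ : Fin n ≃ V, ∀ i : Fin n, μ i = hA.eigenvalues (σ i)) :
    (k : ℝ) - μ ⟨1, by omega⟩ <
      2 * (k : ℝ) * ((r : ℝ) - 1) * (lamL E 2 1 : ℝ) *
        Real.sqrt ((n : ℝ) / ((n / 2 : ℕ) : ℝ)) := by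
  have : Nontrivial V := Fintype.one_lt_card_iff_nontrivial.1 (by omega)
  obtain ⟨u, b, hub⟩ : ∃ u b, (twoSection E).Adj u b :=
    ⟨_, hconn.preconnected.exists_adj_of_nontrivial (Classical.arbitrary V)⟩
  obtain ⟨e, he, hue, -⟩ := hub.2
  have hk : (1 : ℝ) ≤ k := by exact_mod_cast hreg u ▸ hDeg_pos E he hue
  have hr : 2 ≤ r := hunif e he ▸ hsimple.1 e he
  have hr' : (2 : ℝ) ≤ r := by exact_mod_cast hr
  have hrow : ∀ w, ∑ j, ‖hAdjMatrix E w j‖ ≤ k * ((r : ℝ) - 1) := fun w => by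
    rw [sum_norm_hAdjMatrix, ← hreg w, ← Nat.cast_pred (by omega)]
    exact_mod_cast twoSection_degree_le E hunif w
  have hμ : -(k * ((r : ℝ) - 1)) ≤ μ ⟨1, by omega⟩ := by
    obtain ⟨σ, hσ⟩ := hperm
    rw [hσ]
    exact neg_le_of_abs_le (hA.abs_eigenvalues_le hrow _)
  have hlam : (2 : ℝ) ≤ lamL E 2 1 := by exact_mod_cast le_lamL_of_adj E (by norm_num) hub
  have hsq := one_le_sqrt_div_half hn2
  calc (k : ℝ) - μ ⟨1, by omega⟩ ≤ k * r := by linarith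
    _ < 2 * k * (r - 1) * 2 := by nlinarith
    _ ≤ 2 * k * (r - 1) * (lamL E 2 1 * √(n / (n / 2 : ℕ))) := by
      gcongr
      · nlinarith
      · nlinarith
    _ = _ := by ring
end

section
/- Let K^r_{c,m} be an r-uniform star-hypergraph with centre of size c and m ≥ 2 edges (so 1 ≤ c < r). Then λ(K^r_{c,m}) = m(r - c) + 2c - 1, where λ denotes the L(2,1)-chromatic number. -/
open scoped Classical

/-- `IsStarHypergraph E r c m C` : `E` is the edge family of an `r`-uniform star-hypergraph
`K^r_{c,m}` on the whole vertex type, with centre `C` of size `c` and `m` edges, any two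
distinct edges intersecting exactly in the centre. -/
def IsStarHypergraph {V : Type*} (E : Finset (Finset V)) (r c m : ℕ) (C : Finset V) : Prop :=
  E.card = m ∧ (∀ e ∈ E, e.card = r) ∧ C.card = c ∧
    (∀ e₁ ∈ E, ∀ e₂ ∈ E, e₁ ≠ e₂ → e₁ ∩ e₂ = C) ∧
    (∀ v : V, ∃ e ∈ E, v ∈ e)

/-!
Every vertex shares an edge with each centre vertex, and two non-centre vertices either share an
edge or lie in two edges meeting in a centre vertex. Hence an `L(2,1)`-colouring is injective and
each of the `c` centre colours has no neighbouring colour in use. Walking from a centre colour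
towards a fixed non-centre colour, the next integer is a hole of the colour range, and distinct
centre colours give distinct holes; so the range holds at least `|V| + c = m(r - c) + 2c` integers.
Conversely, colouring the centre `0, 2, …, 2c - 2` and the `i`-th non-centre vertex of the `j`-th
edge `2c + j + m i` is an `L(2,1)`-colouring: non-centre vertices of a common edge are `m ≥ 2`
apart.
-/

theorem one_le_hDist_iff {V : Type*} {f : V → ℕ} {u v : V} : 1 ≤ hDist f u v ↔ f u ≠ f v := by
  unfold hDist; omega

theorem two_le_hDist_iff {V : Type*} {f : V → ℕ} {u v : V} :
    2 ≤ hDist f u v ↔ f u + 2 ≤ f v ∨ f v + 2 ≤ f u := by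
  unfold hDist; omega

theorem lamL_eq_of_le_hSpan {V : Type*} [Fintype V] {E : Finset (Finset V)} {h k n : ℕ}
    (hlow : ∀ f, IsLColoring E h k f → n ≤ hSpan f)
    (hopt : ∃ f, IsLColoring E h k f ∧ hSpan f ≤ n) : lamL E h k = n := by
  obtain ⟨f, hf, hfn⟩ := hopt
  have hmem : hSpan f ∈ {s | ∃ g, IsLColoring E h k g ∧ hSpan g = s} := ⟨f, hf, rfl⟩
  refine le_antisymm ((Nat.sInf_le hmem).trans hfn) (le_csInf ⟨_, hmem⟩ ?_)
  rintro _ ⟨g, hg, rfl⟩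
  exact hlow g hg

theorem isLColoring_two_one_of_injective {V : Type*} {E : Finset (Finset V)} {f : V → ℕ}
    (hinj : Function.Injective f)
    (hedge : ∀ u v, u ≠ v → (∃ e ∈ E, u ∈ e ∧ v ∈ e) → 2 ≤ hDist f u v) :
    IsLColoring E 2 1 f :=
  ⟨hedge, fun _ _ huv _ => one_le_hDist_iff.mpr (hinj.ne huv)⟩

theorem Finset.card_add_card_le_of_isolated {S D : Finset ℕ} {a b : ℕ} (hDS : D ⊂ S)
    (hSab : S ⊆ Finset.Icc a b) (hiso : ∀ d ∈ D, ∀ s ∈ S, s + 1 ≠ d ∧ d + 1 ≠ s) :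
    S.card + D.card ≤ b + 1 - a := by
  obtain ⟨t, htS, htD⟩ := Finset.exists_of_ssubset hDS
  -- the neighbour of `d` on the side of `t` is a gap in `[a, b]`
  obtain ⟨gap, hgap⟩ : ∃ g : ℕ → ℕ, ∀ d, g d = if d < t then d + 1 else d - 1 := ⟨_, fun _ => rfl⟩
  have ht : ∀ d ∈ D, d ≠ t := fun d hd hdt => htD (hdt ▸ hd)
  have hgapS : ∀ d ∈ D, gap d ∉ S := by
    intro d hd hgS
    rw [hgap] at hgS
    split_ifs at hgS with hdt
    · exact (hiso d hd _ hgS).2 rfl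
    · have := ht d hd
      exact (hiso d hd _ hgS).1 (Nat.sub_add_cancel (by omega))
  have hgapInj : Set.InjOn gap D := by
    intro d hd d' hd' hdd'
    have := hiso d hd t htS
    have := hiso d' hd' t htS
    have := ht d hd
    have := ht d' hd'
    rw [hgap, hgap] at hdd'
    split_ifs at hdd' <;> omega
  have hgapIcc : D.image gap ⊆ Finset.Icc a b := by
    intro x hx
    obtain ⟨d, hd, rfl⟩ := Finset.mem_image.mp hx
    have hdab := Finset.mem_Icc.mp (hSab (hDS.subset hd))
    have htab := Finset.mem_Icc.mp (hSab htS)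
    have := ht d hd
    rw [hgap, Finset.mem_Icc]
    split_ifs <;> omega
  have hdisj : Disjoint S (D.image gap) := by
    rw [Finset.disjoint_right]
    rintro x hx
    obtain ⟨d, hd, rfl⟩ := Finset.mem_image.mp hx
    exact hgapS d hd
  calc S.card + D.card = (S ∪ D.image gap).card := by
        rw [Finset.card_union_of_disjoint hdisj, Finset.card_image_of_injOn hgapInj]
    _ ≤ (Finset.Icc a b).card := Finset.card_le_card (Finset.union_subset hSab hgapIcc)
    _ = b + 1 - a := Nat.card_Icc a b

theorem Finset.idxOf_toList_lt_card {α : Type*} [DecidableEq α] {s : Finset α} {x : α}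
    (hx : x ∈ s) : s.toList.idxOf x < s.card := by
  rw [← Finset.length_toList]
  exact List.idxOf_lt_length_iff.mpr (Finset.mem_toList.mpr hx)

theorem Finset.injOn_idxOf_toList {α : Type*} [DecidableEq α] (s : Finset α) :
    Set.InjOn s.toList.idxOf s := fun _ hx _ _ h =>
  (List.idxOf_inj (Finset.mem_toList.mpr hx)).mp h

theorem Nat.eq_and_eq_of_add_mul_eq {m j j' i i' : ℕ} (hj : j < m) (hj' : j' < m)
    (h : j + m * i = j' + m * i') : j = j' ∧ i = i' := by
  have hm : 0 < m := by omega
  have hmod := congrArg (· % m) h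
  have hdiv := congrArg (· / m) h
  simp only [Nat.add_mul_mod_self_left, Nat.mod_eq_of_lt hj, Nat.mod_eq_of_lt hj'] at hmod
  simp only [Nat.add_mul_div_left _ _ hm, Nat.div_eq_of_lt hj, Nat.div_eq_of_lt hj'] at hdiv
  omega

theorem Nat.mul_add_le_mul_of_lt {m i i' : ℕ} (h : i < i') : m * i + m ≤ m * i' := by
  simpa [Nat.mul_succ] using Nat.mul_le_mul_left m h

noncomputable def starColouring {V : Type*} (E : Finset (Finset V)) (C : Finset V)
    (edgeOf : V → Finset V) (v : V) : ℕ :=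
  if v ∈ C then 2 * C.toList.idxOf v
  else 2 * C.card + E.toList.idxOf (edgeOf v) + E.card * (edgeOf v \ C).toList.idxOf v

namespace IsStarHypergraph

variable {V : Type*} {E : Finset (Finset V)} {r c m : ℕ} {C : Finset V}

theorem centre_subset (hstar : IsStarHypergraph E r c m C) (hm : 2 ≤ m) {e : Finset V}
    (he : e ∈ E) : C ⊆ e := by
  obtain ⟨hEcard, -, -, hinter, -⟩ := hstar
  obtain ⟨e', he', hne⟩ := Finset.exists_mem_ne (by omega : 1 < E.card) e
  rw [← hinter e' he' e he hne]
  exact Finset.inter_subset_right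

theorem edge_eq_of_notMem_centre (hstar : IsStarHypergraph E r c m C) {v : V} (hv : v ∉ C)
    {e₁ e₂ : Finset V} (he₁ : e₁ ∈ E) (he₂ : e₂ ∈ E) (hv₁ : v ∈ e₁) (hv₂ : v ∈ e₂) :
    e₁ = e₂ := by
  by_contra hne
  exact hv (hstar.2.2.2.1 e₁ he₁ e₂ he₂ hne ▸ Finset.mem_inter.mpr ⟨hv₁, hv₂⟩)

theorem card_eq [Fintype V] (hstar : IsStarHypergraph E r c m C) (hm : 2 ≤ m) :
    Fintype.card V = m * (r - c) + c := by
  have hdisj : (E : Set (Finset V)).PairwiseDisjoint (· \ C) := by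
    intro e₁ he₁ e₂ he₂ hne
    rw [Function.onFun, Finset.disjoint_left]
    intro v hv₁ hv₂
    rw [Finset.mem_sdiff] at hv₁ hv₂
    exact hne (hstar.edge_eq_of_notMem_centre hv₁.2 he₁ he₂ hv₁.1 hv₂.1)
  have hcard : ∀ e ∈ E, (e \ C).card = r - c := fun e he => by
    rw [Finset.card_sdiff_of_subset (hstar.centre_subset hm he), hstar.2.1 e he, hstar.2.2.1]
  obtain ⟨hEcard, -, hCcard, -, hcover⟩ := hstar
  have huniv : (Finset.univ : Finset V) = C ∪ E.biUnion (· \ C) := by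
    ext v
    by_cases hv : v ∈ C
    · simp [hv]
    · obtain ⟨e, he, hve⟩ := hcover v
      simpa [hv] using ⟨e, he, hve⟩
  rw [← Finset.card_univ, huniv, Finset.card_union_of_disjoint, Finset.card_biUnion hdisj,
    Finset.sum_congr rfl hcard, Finset.sum_const, hEcard, hCcard, smul_eq_mul, add_comm]
  rw [Finset.disjoint_biUnion_right]
  exact fun e _ => Finset.disjoint_sdiff

theorem injective_of_isLColoring (hstar : IsStarHypergraph E r c m C) (hm : 2 ≤ m)
    (hC : C.Nonempty) {f : V → ℕ} (hf : IsLColoring E 2 1 f) : Function.Injective f := by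
  intro u v hfuv
  by_contra huv
  obtain ⟨w, hw⟩ := hC
  obtain ⟨e₁, he₁, hu⟩ := hstar.2.2.2.2 u
  obtain ⟨e₂, he₂, hv⟩ := hstar.2.2.2.2 v
  have hw₁ := hstar.centre_subset hm he₁ hw
  have hw₂ := hstar.centre_subset hm he₂ hw
  have hdist : hDist f u v = 0 := by simp [hDist, hfuv]
  by_cases hwuv : w = u ∨ w = v
  · have hshared : ∃ e ∈ E, u ∈ e ∧ v ∈ e := by
      rcases hwuv with rfl | rfl
      exacts [⟨e₂, he₂, hw₂, hv⟩, ⟨e₁, he₁, hu, hw₁⟩]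
    have := hf.1 u v huv hshared
    omega
  · have hcross : ((e₁ ∩ e₂) \ {u, v}).Nonempty :=
      ⟨w, Finset.mem_sdiff.mpr ⟨Finset.mem_inter.mpr ⟨hw₁, hw₂⟩, by simpa using hwuv⟩⟩
    have := hf.2 u v huv ⟨e₁, he₁, e₂, he₂, hu, hv, hcross⟩
    omega

theorem le_hSpan [Fintype V] (hstar : IsStarHypergraph E r c m C) (hm : 2 ≤ m) (hc : 1 ≤ c)
    (hcr : c < r) {f : V → ℕ} (hf : IsLColoring E 2 1 f) :
    m * (r - c) + 2 * c - 1 ≤ hSpan f := by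
  have hCcard : C.card = c := hstar.2.2.1
  have hinj := hstar.injective_of_isLColoring hm (Finset.card_pos.mp (by omega)) hf
  have hcardS : (Finset.univ.image f).card = m * (r - c) + c := by
    rw [Finset.card_image_of_injective _ hinj, Finset.card_univ, hstar.card_eq hm]
  have hcardD : (C.image f).card = c := by
    rw [Finset.card_image_of_injective _ hinj, hCcard]
  have hDS : C.image f ⊂ Finset.univ.image f := by
    refine (Finset.image_subset_image (Finset.subset_univ C)).ssubset_of_ne fun h => ?_
    have : 1 ≤ m * (r - c) := Nat.mul_pos (by omega) (by omega)
    rw [← h] at hcardS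
    omega
  have hSab : Finset.univ.image f ⊆ Finset.Icc (sInf (Set.range f)) (Finset.univ.sup f) := by
    intro x hx
    obtain ⟨v, -, rfl⟩ := Finset.mem_image.mp hx
    exact Finset.mem_Icc.mpr ⟨Nat.sInf_le (Set.mem_range_self v),
      Finset.le_sup (Finset.mem_univ v)⟩
  have hiso : ∀ d ∈ C.image f, ∀ s ∈ Finset.univ.image f, s + 1 ≠ d ∧ d + 1 ≠ s := by
    intro d hd s hs
    obtain ⟨w, hw, rfl⟩ := Finset.mem_image.mp hd
    obtain ⟨v, -, rfl⟩ := Finset.mem_image.mp hs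
    obtain rfl | hvw := eq_or_ne v w
    · omega
    obtain ⟨e, he, hv⟩ := hstar.2.2.2.2 v
    have := two_le_hDist_iff.mp (hf.1 v w hvw ⟨e, he, hv, hstar.centre_subset hm he hw⟩)
    omega
  have := Finset.card_add_card_le_of_isolated hDS hSab hiso
  rw [hcardS, hcardD] at this
  unfold hSpan
  omega

section starColouring

variable {edgeOf : V → Finset V} (hstar : IsStarHypergraph E r c m C) (hm : 2 ≤ m)
  (hedgeOf : ∀ v, edgeOf v ∈ E ∧ v ∈ edgeOf v)
include hstar

theorem starColouring_add_two_le {v : V} (hv : v ∈ C) : starColouring E C edgeOf v + 2 ≤ 2 * c := by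
  have := hstar.2.2.1 ▸ Finset.idxOf_toList_lt_card hv
  rw [starColouring, if_pos hv]
  omega

theorem starColouring_of_notMem {v : V} (hv : v ∉ C) : starColouring E C edgeOf v =
    2 * c + E.toList.idxOf (edgeOf v) + m * (edgeOf v \ C).toList.idxOf v := by
  rw [starColouring, if_neg hv, hstar.1, hstar.2.2.1]

include hm hedgeOf

theorem idxOf_lt_of_notMem_centre {v : V} (hv : v ∉ C) :
    E.toList.idxOf (edgeOf v) < m ∧ (edgeOf v \ C).toList.idxOf v < r - c := by
  refine ⟨hstar.1 ▸ Finset.idxOf_toList_lt_card (hedgeOf v).1, ?_⟩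
  rw [← hstar.2.1 _ (hedgeOf v).1, ← hstar.2.2.1,
    ← Finset.card_sdiff_of_subset (hstar.centre_subset hm (hedgeOf v).1)]
  exact Finset.idxOf_toList_lt_card (Finset.mem_sdiff.mpr ⟨(hedgeOf v).2, hv⟩)

theorem starColouring_lt (v : V) : starColouring E C edgeOf v < 2 * c + m * (r - c) := by
  by_cases hv : v ∈ C
  · have := hstar.starColouring_add_two_le (edgeOf := edgeOf) hv
    omega
  · obtain ⟨hj, hi⟩ := hstar.idxOf_lt_of_notMem_centre hm hedgeOf hv
    rw [hstar.starColouring_of_notMem hv, add_assoc]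
    exact Nat.add_lt_add_left (Nat.add_mul_lt_mul_of_lt_of_lt hj hi) _

theorem two_le_hDist_starColouring {u v : V} (huv : u ≠ v)
    (h : u ∈ C ∨ v ∈ C ∨ edgeOf u = edgeOf v) : 2 ≤ hDist (starColouring E C edgeOf) u v := by
  rw [two_le_hDist_iff]
  by_cases hu : u ∈ C <;> by_cases hv : v ∈ C
  · have := C.injOn_idxOf_toList.ne hu hv huv
    rw [starColouring, starColouring, if_pos hu, if_pos hv]
    omega
  · have := hstar.starColouring_add_two_le (edgeOf := edgeOf) hu
    rw [hstar.starColouring_of_notMem hv]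
    omega
  · have := hstar.starColouring_add_two_le (edgeOf := edgeOf) hv
    rw [hstar.starColouring_of_notMem hu]
    omega
  · have hedge : edgeOf u = edgeOf v := (h.resolve_left hu).resolve_left hv
    have hpos := (edgeOf v \ C).injOn_idxOf_toList.ne
      (Finset.mem_sdiff.mpr ⟨hedge ▸ (hedgeOf u).2, hu⟩)
      (Finset.mem_sdiff.mpr ⟨(hedgeOf v).2, hv⟩) huv
    rw [hstar.starColouring_of_notMem hu, hstar.starColouring_of_notMem hv, hedge]
    rcases Nat.lt_or_gt_of_ne hpos with hlt | hlt
    · have := Nat.mul_add_le_mul_of_lt (m := m) hlt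
      omega
    · have := Nat.mul_add_le_mul_of_lt (m := m) hlt
      omega

theorem injective_starColouring : Function.Injective (starColouring E C edgeOf) := by
  intro u v huv
  by_contra hne
  by_cases h : u ∈ C ∨ v ∈ C ∨ edgeOf u = edgeOf v
  · have := two_le_hDist_iff.mp (hstar.two_le_hDist_starColouring hm hedgeOf hne h)
    omega
  · obtain ⟨hu, hv, hedge⟩ := not_or.mp h |>.imp_right not_or.mp
    rw [hstar.starColouring_of_notMem hu, hstar.starColouring_of_notMem hv] at huv
    have hsum : E.toList.idxOf (edgeOf u) + m * (edgeOf u \ C).toList.idxOf u =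
        E.toList.idxOf (edgeOf v) + m * (edgeOf v \ C).toList.idxOf v := by
      omega
    obtain ⟨hidx, -⟩ := Nat.eq_and_eq_of_add_mul_eq
      (hstar.idxOf_lt_of_notMem_centre hm hedgeOf hu).1
      (hstar.idxOf_lt_of_notMem_centre hm hedgeOf hv).1 hsum
    exact hedge (E.injOn_idxOf_toList (hedgeOf u).1 (hedgeOf v).1 hidx)

theorem isLColoring_starColouring : IsLColoring E 2 1 (starColouring E C edgeOf) := by
  refine isLColoring_two_one_of_injective (hstar.injective_starColouring hm hedgeOf) ?_
  rintro u v huv ⟨e, he, hue, hve⟩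
  refine hstar.two_le_hDist_starColouring hm hedgeOf huv ?_
  by_cases hu : u ∈ C
  · exact .inl hu
  by_cases hv : v ∈ C
  · exact .inr (.inl hv)
  have hue' := hstar.edge_eq_of_notMem_centre hu (hedgeOf u).1 he (hedgeOf u).2 hue
  have hve' := hstar.edge_eq_of_notMem_centre hv (hedgeOf v).1 he (hedgeOf v).2 hve
  exact .inr (.inr (hue'.trans hve'.symm))

end starColouring

theorem exists_isLColoring_hSpan_le [Fintype V] (hstar : IsStarHypergraph E r c m C)
    (hm : 2 ≤ m) : ∃ f, IsLColoring E 2 1 f ∧ hSpan f ≤ m * (r - c) + 2 * c - 1 := by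
  choose edgeOf hedgeOf using hstar.2.2.2.2
  refine ⟨_, hstar.isLColoring_starColouring hm hedgeOf, ?_⟩
  have hsup : Finset.univ.sup (starColouring E C edgeOf) ≤ 2 * c + m * (r - c) - 1 :=
    Finset.sup_le fun v _ => Nat.le_sub_one_of_lt (hstar.starColouring_lt hm hedgeOf v)
  unfold hSpan
  omega

end IsStarHypergraph

/-- For an `r`-uniform star-hypergraph `K^r_{c,m}` with centre of size `c`
(`1 ≤ c < r`) and `m ≥ 2` edges, `λ(K^r_{c,m}) = m(r - c) + 2c - 1`. -/
theorem lamL_starHypergraph {V : Type*} [Fintype V] (E : Finset (Finset V))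
    (r c m : ℕ) (C : Finset V)
    (hm : 2 ≤ m) (hc : 1 ≤ c) (hcr : c < r)
    (hstar : IsStarHypergraph E r c m C) :
    lamL E 2 1 = m * (r - c) + 2 * c - 1 :=
  lamL_eq_of_le_hSpan (fun _ hf => hstar.le_hSpan hm hc hcr hf)
    (hstar.exists_isLColoring_hSpan_le hm)
end
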